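/- Let T be a rank-4 lattice with basis ε₁, ε₂, ε₃, ε₄ and consider the sixteen weights (±ε₁±ε₂±ε₃±ε₄)/2 (in the lattice generated by the εᵢ and their half-sums). The semigroup of nonnegative integer relations among these weights is not free: its minimal generating set contains the eight relations pairing each weight with its negative, together with the relation X_{(ε₁+ε₂+ε₃−ε₄)/2}X_{(ε₁+ε₂−ε₃+ε₄)/2}X_{(−ε₁−ε₂+ε₃+ε₄)/2}X_{(−ε₁−ε₂−ε₃−ε₄)/2}, exceeding the rank 16 − 4 = 12 of the relation lattice. -/

import Mathlib

/-- The semigroup of nonnegative integer relations among a list of weights. -/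
def relSemigroup {M : Type*} [AddCommGroup M] {n : ℕ} (w : Fin n → M) :
    AddSubmonoid (Fin n → ℕ) where
  carrier := {a | ∑ i, (a i : ℤ) • w i = 0}
  add_mem' := by
    intro a b ha hb
    simp only [Set.mem_setOf_eq] at *
    have : ∀ i ∈ Finset.univ, (((a + b) i : ℕ) : ℤ) • w i
        = (a i : ℤ) • w i + (b i : ℤ) • w i := by
      intro i _
      have : (((a + b) i : ℕ) : ℤ) = (a i : ℤ) + (b i : ℤ) := by simp [Pi.add_apply]
      rw [this, add_smul]
    rw [Finset.sum_congr rfl this, Finset.sum_add_distrib, ha, hb, add_zero]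
  zero_mem' := by simp

def IsFreeRelMonoid {n : ℕ} (A : AddSubmonoid (Fin n → ℕ)) : Prop :=
  ∃ r : ℕ, Nonempty (A ≃+ (Fin r → ℕ))

def IsIrreducibleIn {n : ℕ} (A : AddSubmonoid (Fin n → ℕ)) (a : Fin n → ℕ) : Prop :=
  a ∈ A ∧ a ≠ 0 ∧ ∀ b c : Fin n → ℕ, b ∈ A → c ∈ A → b + c = a → b = 0 ∨ c = 0

/-!
In a free commutative monoid `ι → ℕ` the coordinate sum is an additive length function equal to
`1` on every irreducible element, so all decompositions of an element into irreducibles have the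
same number of factors. For the sign vectors, the quadruple relation `q` and its negative `q'`
(the same four weights negated) are irreducible, yet `q + q'` is also the sum of the four pairing
relations `p₀ + p₃ + p₄ + p₇`: two factorizations of different lengths.
-/

theorem Pi.sum_eq_one_of_addIrreducible {ι : Type*} [Fintype ι] {x : ι → ℕ}
    (hx : AddIrreducible x) : ∑ i, x i = 1 := by
  classical
  obtain ⟨j, hj⟩ : ∃ j, x j ≠ 0 := by
    by_contra! h
    exact hx.not_isAddUnit (funext h ▸ isAddUnit_zero)
  have hle : Pi.single j 1 ≤ x := by
    intro k
    rcases eq_or_ne k j with rfl | hk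
    · simpa using Nat.one_le_iff_ne_zero.2 hj
    · simp [hk]
  rcases hx.isAddUnit_or_isAddUnit (add_tsub_cancel_of_le hle).symm with h | h <;>
    rw [isAddUnit_iff_eq_zero] at h
  · simpa using congrFun h j
  · rw [le_antisymm (tsub_eq_zero_iff_le.1 h) hle]
    simp

theorem AddEquiv.sum_apply_list_sum_eq_length {M ι : Type*} [AddCommMonoid M] [Fintype ι]
    (φ : M ≃+ (ι → ℕ)) {l : List M} (hl : ∀ a ∈ l, AddIrreducible a) :
    ∑ i, φ l.sum i = l.length := by
  induction l with
  | nil => simp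
  | cons a l ih =>
    simp only [List.forall_mem_cons] at hl
    rw [List.sum_cons, map_add, List.length_cons, ← ih hl.2]
    simp only [Pi.add_apply, Finset.sum_add_distrib, Pi.sum_eq_one_of_addIrreducible (hl.1.map φ)]
    ring

theorem IsIrreducibleIn.addIrreducible {n : ℕ} {A : AddSubmonoid (Fin n → ℕ)} {a : Fin n → ℕ}
    (ha : IsIrreducibleIn A a) : AddIrreducible (⟨a, ha.1⟩ : A) where
  not_isAddUnit := by
    rintro ⟨⟨_, b, hab, -⟩, rfl⟩
    exact ha.2.1 (add_eq_zero.1 (congrArg Subtype.val hab)).1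
  isAddUnit_or_isAddUnit b c hbc := by
    refine (ha.2.2 b c b.2 c.2 (congrArg Subtype.val hbc).symm).imp ?_ ?_ <;>
      exact fun h => (Subtype.ext h : _ = (0 : A)) ▸ isAddUnit_zero

theorem not_isFreeRelMonoid_of_sum_eq {n : ℕ} {A : AddSubmonoid (Fin n → ℕ)}
    {l₁ l₂ : List (Fin n → ℕ)} (h₁ : ∀ a ∈ l₁, IsIrreducibleIn A a)
    (h₂ : ∀ a ∈ l₂, IsIrreducibleIn A a) (hsum : l₁.sum = l₂.sum)
    (hlen : l₁.length ≠ l₂.length) : ¬ IsFreeRelMonoid A := by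
  rintro ⟨r, ⟨φ⟩⟩
  lift l₁ to List A using fun a ha => (h₁ a ha).1
  lift l₂ to List A using fun a ha => (h₂ a ha).1
  have hsum' : l₁.sum = l₂.sum := by
    ext1
    simpa only [AddSubmonoid.coe_list_sum] using hsum
  have irreducible (l : List A) (h : ∀ a ∈ l.map Subtype.val, IsIrreducibleIn A a) :
      ∀ a ∈ l, AddIrreducible a :=
    fun a ha => (h a (List.mem_map_of_mem ha)).addIrreducible
  apply hlen
  rw [List.length_map, List.length_map,
    ← φ.sum_apply_list_sum_eq_length (irreducible l₁ h₁),
    ← φ.sum_apply_list_sum_eq_length (irreducible l₂ h₂), hsum']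

instance {M : Type*} [AddCommGroup M] [DecidableEq M] {n : ℕ} (w : Fin n → M) :
    DecidablePred (· ∈ relSemigroup w) :=
  fun a => decidable_of_iff (∑ i, (a i : ℤ) • w i = 0) Iff.rfl

theorem isIrreducibleIn_iff_forall_le {n : ℕ} {A : AddSubmonoid (Fin n → ℕ)} {a : Fin n → ℕ} :
    IsIrreducibleIn A a ↔
      a ∈ A ∧ a ≠ 0 ∧ ∀ b ∈ Finset.Iic a, b ∈ A → a - b ∈ A → b = 0 ∨ a - b = 0 := by
  refine and_congr_right' (and_congr_right' ⟨fun h b hb hbA hcA => ?_, fun h b c hb hc hbc => ?_⟩)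
  · exact h b (a - b) hbA hcA (add_tsub_cancel_of_le (Finset.mem_Iic.1 hb))
  · subst hbc
    simpa using h b (by simp) hb (by simpa using hc)

instance {n : ℕ} (A : AddSubmonoid (Fin n → ℕ)) [DecidablePred (· ∈ A)] :
    DecidablePred (IsIrreducibleIn A) :=
  fun _ => decidable_of_iff _ isIrreducibleIn_iff_forall_le.symm

/-- for the sixteen weights `(±ε₁±ε₂±ε₃±ε₄)/2` in the lattice generated by
the `εᵢ` and their half-sums (here represented by the doubled weights, the sixteen sign
vectors, which has the same relation semigroup), the relation semigroup is not free: its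
minimal generating set contains the eight relations pairing each weight with its negative
together with the quadruple relation
`X_{(ε₁+ε₂+ε₃−ε₄)/2} X_{(ε₁+ε₂−ε₃+ε₄)/2} X_{(−ε₁−ε₂+ε₃+ε₄)/2} X_{(−ε₁−ε₂−ε₃−ε₄)/2}`,
exceeding the rank `16 − 4 = 12` of the relation lattice. -/
theorem stmt19 :
    -- weight with index i has j-th coordinate −1 exactly when bit j of i is set
    let w : Fin 16 → (Fin 4 → ℤ) := fun i j => if Nat.testBit i.val j.val then -1 else 1
    let A := relSemigroup w
    let u : Fin 16 → (Fin 16 → ℕ) := fun i => Pi.single i 1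
    -- the eight relations pairing each weight with its negative
    let p : Fin 8 → (Fin 16 → ℕ) := fun i => u ⟨i.val, by omega⟩ + u ⟨15 - i.val, by omega⟩
    -- X_{(ε₁+ε₂+ε₃−ε₄)/2} X_{(ε₁+ε₂−ε₃+ε₄)/2} X_{(−ε₁−ε₂+ε₃+ε₄)/2} X_{(−ε₁−ε₂−ε₃−ε₄)/2}
    let q : Fin 16 → ℕ := u 8 + u 4 + u 3 + u 15
    (∀ i : Fin 8, IsIrreducibleIn A (p i)) ∧
    IsIrreducibleIn A q ∧
    (insert q (Finset.image p Finset.univ)).card = 9 ∧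
    ¬ IsFreeRelMonoid A := by
  intro w A u p q
  have hp : ∀ i : Fin 8, IsIrreducibleIn A (p i) := by decide
  have hq : IsIrreducibleIn A q := by decide
  let q' : Fin 16 → ℕ := u 7 + u 11 + u 12 + u 0
  have hq' : IsIrreducibleIn A q' := by decide
  refine ⟨hp, hq, by decide, ?_⟩
  exact not_isFreeRelMonoid_of_sum_eq (l₁ := [q, q']) (l₂ := [p 0, p 3, p 4, p 7])
    (by simp [hq, hq']) (by simp [hp]) (by decide) (by decide)
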